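/- Let (v₀, v₁, v₂, v₃) be four affinely independent points of ℝ³ and for each i let μᵢ : ℝ³ → ℝ be the corresponding barycentric coordinate function, i.e., the unique affine function with μᵢ(vⱼ) = δᵢⱼ; since μᵢ is affine its gradient ∇μᵢ is a constant vector. For distinct i, j, k define the Whitney vector field of the triangular face [vᵢ, vⱼ, v_k] by F = 2(μᵢ ∇μⱼ × ∇μ_k − μⱼ ∇μᵢ × ∇μ_k + μ_k ∇μᵢ × ∇μⱼ), where × is the cross product on ℝ³. Then for any three distinct indices a, b, c ∈ {0, 1, 2, 3} with {a, b, c} ≠ {i, j, k}, the flux of F through the face [vₐ, v_b, v_c] vanishes: ∫∫_{s,t ≥ 0, s+t ≤ 1} ⟨F(vₐ + s(v_b − vₐ) + t(v_c − vₐ)), (v_b − vₐ) × (v_c − vₐ)⟩ ds dt = 0. (Together with the value 1 on its own face, this says Whitney interpolation reproduces the flux cochain values on the faces of a tetrahedron.) -/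

import Mathlib

/-!
Some vertex `vₗ` of the face `[vᵢ, vⱼ, vₖ]` is not a vertex of `[vₐ, v_b, v_c]`. The affine
function `μₗ` vanishes at the three vertices of that face, hence on all of it, and its constant
gradient `∇μₗ` is orthogonal to both edge vectors `v_b − vₐ`, `v_c − vₐ`. By the Binet–Cauchy
identity, every term of the Whitney field either carries the factor `μₗ` or has the form
`(∇μₗ × ·) ⋅ ((v_b − vₐ) × (v_c − vₐ))`, so the flux integrand vanishes identically.
-/

open Matrix MeasureTheory

theorem Set.exists_mem_notMem_of_ne_triple {α : Type*} {i j k a b c : α}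
    (hij : i ≠ j) (hik : i ≠ k) (hjk : j ≠ k) (hne : ({a, b, c} : Set α) ≠ {i, j, k}) :
    ∃ l ∈ ({i, j, k} : Set α), l ∉ ({a, b, c} : Set α) := by
  by_contra! hsub
  have hcard : ({a, b, c} : Set α).ncard ≤ ({i, j, k} : Set α).ncard := by
    rw [Set.ncard_eq_three.mpr ⟨i, j, k, hij, hik, hjk, rfl⟩]
    grw [Set.ncard_insert_le, Set.ncard_insert_le, Set.ncard_singleton]
  exact hne (Set.eq_of_subset_of_ncard_le hsub hcard).symm

section Affine

variable {ι R : Type*} [Fintype ι] [CommRing R] {f : (ι → R) → R} {g : ι → R}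

theorem dotProduct_sub_eq_of_affine (hf : ∀ x, f x = g ⬝ᵥ x + f 0) (x y : ι → R) :
    g ⬝ᵥ (x - y) = f x - f y := by
  rw [hf x, hf y, dotProduct_sub]
  ring

theorem apply_add_smul_add_smul_of_affine (hf : ∀ x, f x = g ⬝ᵥ x + f 0) (p u w : ι → R)
    (s t : R) : f (p + s • u + t • w) = f p + s * (g ⬝ᵥ u) + t * (g ⬝ᵥ w) := by
  rw [hf (p + s • u + t • w), hf p]
  simp only [dotProduct_add, dotProduct_smul, smul_eq_mul]
  ring

end Affine

section CrossProduct

variable {R : Type*} [CommRing R]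

theorem cross_dot_cross_eq_zero_of_left {e h u w : Fin 3 → R} (hu : e ⬝ᵥ u = 0)
    (hw : e ⬝ᵥ w = 0) : (e ⨯₃ h) ⬝ᵥ (u ⨯₃ w) = 0 := by
  rw [cross_dot_cross, hu, hw]
  ring

theorem cross_dot_cross_eq_zero_of_right {e h u w : Fin 3 → R} (hu : e ⬝ᵥ u = 0)
    (hw : e ⬝ᵥ w = 0) : (h ⨯₃ e) ⬝ᵥ (u ⨯₃ w) = 0 := by
  rw [cross_dot_cross, hu, hw]
  ring

theorem whitney_dot_cross_eq_zero {ι : Type*} (m : ι → R) (e : ι → Fin 3 → R) {i j k l : ι}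
    (hl : l ∈ ({i, j, k} : Set ι)) (hm : m l = 0) {u w : Fin 3 → R} (hu : e l ⬝ᵥ u = 0)
    (hw : e l ⬝ᵥ w = 0) :
    ((2 : R) • (m i • (e j ⨯₃ e k) - m j • (e i ⨯₃ e k) + m k • (e i ⨯₃ e j))) ⬝ᵥ (u ⨯₃ w)
      = 0 := by
  rcases hl with rfl | rfl | rfl <;>
    simp [hm, cross_dot_cross_eq_zero_of_left hu hw, cross_dot_cross_eq_zero_of_right hu hw]

end CrossProduct

theorem whitney_face_flux_other_face_general
    (v : Fin 4 → (Fin 3 → ℝ))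
    (μ : Fin 4 → (Fin 3 → ℝ) → ℝ) (g : Fin 4 → (Fin 3 → ℝ))
    (haff : ∀ l x, μ l x = g l ⬝ᵥ x + μ l 0)
    (hbar : ∀ l m, μ l (v m) = if l = m then 1 else 0)
    (i j k : Fin 4) (hij : i ≠ j) (hik : i ≠ k) (hjk : j ≠ k)
    (a b c : Fin 4)
    (hne : ({a, b, c} : Set (Fin 4)) ≠ {i, j, k}) :
    (∫ q in {q : ℝ × ℝ | 0 ≤ q.1 ∧ 0 ≤ q.2 ∧ q.1 + q.2 ≤ 1},
      ((2 : ℝ) • (μ i (v a + q.1 • (v b - v a) + q.2 • (v c - v a)) • (g j ⨯₃ g k)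
        - μ j (v a + q.1 • (v b - v a) + q.2 • (v c - v a)) • (g i ⨯₃ g k)
        + μ k (v a + q.1 • (v b - v a) + q.2 • (v c - v a)) • (g i ⨯₃ g j)))
        ⬝ᵥ ((v b - v a) ⨯₃ (v c - v a))) = 0 := by
  obtain ⟨l, hl, hlabc⟩ := Set.exists_mem_notMem_of_ne_triple hij hik hjk hne
  simp only [Set.mem_insert_iff, Set.mem_singleton_iff, not_or] at hlabc
  obtain ⟨hla, hlb, hlc⟩ := hlabc
  have hb : g l ⬝ᵥ (v b - v a) = 0 := by
    rw [dotProduct_sub_eq_of_affine (haff l), hbar, hbar, if_neg hlb, if_neg hla, sub_zero]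
  have hc : g l ⬝ᵥ (v c - v a) = 0 := by
    rw [dotProduct_sub_eq_of_affine (haff l), hbar, hbar, if_neg hlc, if_neg hla, sub_zero]
  have hface : ∀ s t : ℝ, μ l (v a + s • (v b - v a) + t • (v c - v a)) = 0 := fun s t => by
    rw [apply_add_smul_add_smul_of_affine (haff l), hbar, if_neg hla, hb, hc]
    ring
  have hzero := fun q : ℝ × ℝ =>
    whitney_dot_cross_eq_zero (fun l => μ l (v a + q.1 • (v b - v a) + q.2 • (v c - v a))) g hl
      (hface q.1 q.2) hb hc
  simp only [hzero, integral_zero]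

/-- Whitney interpolation on a tetrahedron vanishes on the other faces:
if `μ l` are the barycentric coordinate functions of an affinely independent quadruple
`(v₀, v₁, v₂, v₃)` in ℝ³ (affine functions with `μ l (v m) = δₗₘ` and constant gradient
`g l`), then the flux of the Whitney vector field
`F = 2(μᵢ ∇μⱼ × ∇μₖ − μⱼ ∇μᵢ × ∇μₖ + μₖ ∇μᵢ × ∇μⱼ)` of the face `[vᵢ, vⱼ, vₖ]`
through any face `[vₐ, v_b, v_c]` with `{a, b, c} ≠ {i, j, k}` equals 0. -/
theorem whitney_face_flux_other_face
    (v : Fin 4 → (Fin 3 → ℝ)) (hv : AffineIndependent ℝ v)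
    (μ : Fin 4 → (Fin 3 → ℝ) → ℝ) (g : Fin 4 → (Fin 3 → ℝ))
    (haff : ∀ l x, μ l x = g l ⬝ᵥ x + μ l 0)
    (hbar : ∀ l m, μ l (v m) = if l = m then 1 else 0)
    (i j k : Fin 4) (hij : i ≠ j) (hik : i ≠ k) (hjk : j ≠ k)
    (a b c : Fin 4) (hab : a ≠ b) (hac : a ≠ c) (hbc : b ≠ c)
    (hne : ({a, b, c} : Set (Fin 4)) ≠ {i, j, k}) :
    (∫ q in {q : ℝ × ℝ | 0 ≤ q.1 ∧ 0 ≤ q.2 ∧ q.1 + q.2 ≤ 1},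
      ((2 : ℝ) • (μ i (v a + q.1 • (v b - v a) + q.2 • (v c - v a)) • (g j ⨯₃ g k)
        - μ j (v a + q.1 • (v b - v a) + q.2 • (v c - v a)) • (g i ⨯₃ g k)
        + μ k (v a + q.1 • (v b - v a) + q.2 • (v c - v a)) • (g i ⨯₃ g j)))
        ⬝ᵥ ((v b - v a) ⨯₃ (v c - v a))) = 0 :=
  whitney_face_flux_other_face_general v μ g haff hbar i j k hij hik hjk a b c hne
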